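/- arXiv:1208.1469 — 3 statements merged into one kernel-verified Lean document; each statement's English description precedes it below -/
import Mathlib

section
/- For every periodic grid function φ, h² Σ_{i,j} (Δ_h^xφ)(i,j)·(Δ_h^yφ)(i,j) ≥ 0; consequently h² Σ_{i,j} (Δ_h^xφ)(i,j)² ≤ h² Σ_{i,j} (Δ_hφ)(i,j)² and h² Σ_{i,j} (Δ_h^yφ)(i,j)² ≤ h² Σ_{i,j} (Δ_hφ)(i,j)². -/
open Finset

noncomputable section

/-- Periodic grid functions on an `m × n` grid (indices taken modulo `m` and `n`). -/
abbrev Grid (m n : ℕ) := ZMod m × ZMod n → ℝ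

/-- The five-point discrete Laplacian. -/
def lapH {m n : ℕ} (h : ℝ) (φ : Grid m n) : Grid m n :=
  fun p => (φ (p.1 + 1, p.2) + φ (p.1 - 1, p.2) + φ (p.1, p.2 + 1) + φ (p.1, p.2 - 1)
    - 4 * φ p) / h ^ 2

/-- One-dimensional discrete Laplacian in the `x` direction. -/
def lapHx {m n : ℕ} (h : ℝ) (φ : Grid m n) : Grid m n :=
  fun p => (φ (p.1 + 1, p.2) - 2 * φ p + φ (p.1 - 1, p.2)) / h ^ 2

/-- One-dimensional discrete Laplacian in the `y` direction. -/
def lapHy {m n : ℕ} (h : ℝ) (φ : Grid m n) : Grid m n :=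
  fun p => (φ (p.1, p.2 + 1) - 2 * φ p + φ (p.1, p.2 - 1)) / h ^ 2

lemma sum_shift {m n : ℕ} [NeZero m] [NeZero n] (F : ZMod m × ZMod n → ℝ)
    (a : ZMod m) (b : ZMod n) :
    ∑ p : ZMod m × ZMod n, F (p.1 + a, p.2 + b) = ∑ p : ZMod m × ZMod n, F p :=
  Fintype.sum_equiv ((Equiv.addRight a).prodCongr (Equiv.addRight b)) _ _
    (fun p => by cases p; rfl)

lemma cross_sum_eq {m n : ℕ} [NeZero m] [NeZero n] (φ : Grid m n) :
    (∑ p : ZMod m × ZMod n,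
        (φ (p.1+1, p.2) - 2 * φ p + φ (p.1-1, p.2)) *
        (φ (p.1, p.2+1) - 2 * φ p + φ (p.1, p.2-1)))
      = ∑ p : ZMod m × ZMod n,
          (φ (p.1+1, p.2+1) - φ (p.1+1, p.2) - φ (p.1, p.2+1) + φ p) ^ 2 := by
  have E1 : (∑ p : ZMod m × ZMod n, φ (p.1+1, p.2) * φ (p.1, p.2-1))
      = ∑ p : ZMod m × ZMod n, φ (p.1+1, p.2+1) * φ p := by
    rw [← sum_shift (fun p => φ (p.1+1, p.2+1) * φ p) 0 (-1)]
    exact Finset.sum_congr rfl fun p _ => by simp [sub_eq_add_neg]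
  have E2 : (∑ p : ZMod m × ZMod n, φ (p.1-1, p.2) * φ (p.1, p.2+1))
      = ∑ p : ZMod m × ZMod n, φ (p.1+1, p.2+1) * φ p := by
    rw [← sum_shift (fun p => φ (p.1+1, p.2+1) * φ p) (-1) 0]
    refine Finset.sum_congr rfl fun p _ => ?_
    simp [sub_eq_add_neg]
    ring
  have E3 : (∑ p : ZMod m × ZMod n, φ (p.1-1, p.2) * φ (p.1, p.2-1))
      = ∑ p : ZMod m × ZMod n, φ (p.1+1, p.2) * φ (p.1, p.2+1) := by
    rw [← sum_shift (fun p => φ (p.1+1, p.2) * φ (p.1, p.2+1)) (-1) (-1)]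
    refine Finset.sum_congr rfl fun p _ => ?_
    simp [sub_eq_add_neg]
    ring
  have E4 : (∑ p : ZMod m × ZMod n, φ (p.1-1, p.2) * φ p)
      = ∑ p : ZMod m × ZMod n, φ (p.1+1, p.2) * φ p := by
    rw [← sum_shift (fun p => φ (p.1+1, p.2) * φ p) (-1) 0]
    refine Finset.sum_congr rfl fun p _ => ?_
    simp [sub_eq_add_neg]
    ring
  have E5 : (∑ p : ZMod m × ZMod n, φ (p.1, p.2-1) * φ p)
      = ∑ p : ZMod m × ZMod n, φ (p.1, p.2+1) * φ p := by
    rw [← sum_shift (fun p => φ (p.1, p.2+1) * φ p) 0 (-1)]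
    refine Finset.sum_congr rfl fun p _ => ?_
    simp [sub_eq_add_neg]
    ring
  have E6 : (∑ p : ZMod m × ZMod n, φ (p.1+1, p.2+1) ^ 2)
      = ∑ p : ZMod m × ZMod n, φ p ^ 2 :=
    sum_shift (fun p => φ p ^ 2) 1 1
  have E7 : (∑ p : ZMod m × ZMod n, φ (p.1+1, p.2) ^ 2)
      = ∑ p : ZMod m × ZMod n, φ p ^ 2 := by
    rw [← sum_shift (fun p => φ p ^ 2) 1 0]
    exact Finset.sum_congr rfl fun p _ => by simp
  have E8 : (∑ p : ZMod m × ZMod n, φ (p.1, p.2+1) ^ 2)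
      = ∑ p : ZMod m × ZMod n, φ p ^ 2 := by
    rw [← sum_shift (fun p => φ p ^ 2) 0 1]
    exact Finset.sum_congr rfl fun p _ => by simp
  have E9 : (∑ p : ZMod m × ZMod n, φ (p.1+1, p.2+1) * φ (p.1+1, p.2))
      = ∑ p : ZMod m × ZMod n, φ (p.1, p.2+1) * φ p := by
    rw [← sum_shift (fun p => φ (p.1, p.2+1) * φ p) 1 0]
    exact Finset.sum_congr rfl fun p _ => by simp
  have E10 : (∑ p : ZMod m × ZMod n, φ (p.1+1, p.2+1) * φ (p.1, p.2+1))
      = ∑ p : ZMod m × ZMod n, φ (p.1+1, p.2) * φ p := by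
    rw [← sum_shift (fun p => φ (p.1+1, p.2) * φ p) 0 1]
    exact Finset.sum_congr rfl fun p _ => by simp
  have L : (∑ p : ZMod m × ZMod n,
        (φ (p.1+1, p.2) - 2 * φ p + φ (p.1-1, p.2)) *
        (φ (p.1, p.2+1) - 2 * φ p + φ (p.1, p.2-1)))
      = (∑ p : ZMod m × ZMod n, φ (p.1+1, p.2) * φ (p.1, p.2+1))
        + (∑ p : ZMod m × ZMod n, φ (p.1+1, p.2) * φ (p.1, p.2-1))
        + (∑ p : ZMod m × ZMod n, φ (p.1-1, p.2) * φ (p.1, p.2+1))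
        + (∑ p : ZMod m × ZMod n, φ (p.1-1, p.2) * φ (p.1, p.2-1))
        - 2 * (∑ p : ZMod m × ZMod n, φ (p.1+1, p.2) * φ p)
        - 2 * (∑ p : ZMod m × ZMod n, φ (p.1-1, p.2) * φ p)
        - 2 * (∑ p : ZMod m × ZMod n, φ (p.1, p.2+1) * φ p)
        - 2 * (∑ p : ZMod m × ZMod n, φ (p.1, p.2-1) * φ p)
        + 4 * (∑ p : ZMod m × ZMod n, φ p ^ 2) := by
    rw [Finset.sum_congr rfl (g := fun p =>
        φ (p.1+1, p.2) * φ (p.1, p.2+1) + φ (p.1+1, p.2) * φ (p.1, p.2-1)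
        + φ (p.1-1, p.2) * φ (p.1, p.2+1) + φ (p.1-1, p.2) * φ (p.1, p.2-1)
        - 2 * (φ (p.1+1, p.2) * φ p) - 2 * (φ (p.1-1, p.2) * φ p)
        - 2 * (φ (p.1, p.2+1) * φ p) - 2 * (φ (p.1, p.2-1) * φ p)
        + 4 * (φ p ^ 2)) (fun p _ => by ring)]
    simp only [Finset.sum_add_distrib, Finset.sum_sub_distrib, ← Finset.mul_sum]
  have R : (∑ p : ZMod m × ZMod n,
        (φ (p.1+1, p.2+1) - φ (p.1+1, p.2) - φ (p.1, p.2+1) + φ p) ^ 2)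
      = (∑ p : ZMod m × ZMod n, φ (p.1+1, p.2+1) ^ 2)
        + (∑ p : ZMod m × ZMod n, φ (p.1+1, p.2) ^ 2)
        + (∑ p : ZMod m × ZMod n, φ (p.1, p.2+1) ^ 2)
        + (∑ p : ZMod m × ZMod n, φ p ^ 2)
        - 2 * (∑ p : ZMod m × ZMod n, φ (p.1+1, p.2+1) * φ (p.1+1, p.2))
        - 2 * (∑ p : ZMod m × ZMod n, φ (p.1+1, p.2+1) * φ (p.1, p.2+1))
        + 2 * (∑ p : ZMod m × ZMod n, φ (p.1+1, p.2+1) * φ p)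
        + 2 * (∑ p : ZMod m × ZMod n, φ (p.1+1, p.2) * φ (p.1, p.2+1))
        - 2 * (∑ p : ZMod m × ZMod n, φ (p.1+1, p.2) * φ p)
        - 2 * (∑ p : ZMod m × ZMod n, φ (p.1, p.2+1) * φ p) := by
    rw [Finset.sum_congr rfl (g := fun p =>
        φ (p.1+1, p.2+1) ^ 2 + φ (p.1+1, p.2) ^ 2 + φ (p.1, p.2+1) ^ 2 + φ p ^ 2
        - 2 * (φ (p.1+1, p.2+1) * φ (p.1+1, p.2))
        - 2 * (φ (p.1+1, p.2+1) * φ (p.1, p.2+1))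
        + 2 * (φ (p.1+1, p.2+1) * φ p)
        + 2 * (φ (p.1+1, p.2) * φ (p.1, p.2+1))
        - 2 * (φ (p.1+1, p.2) * φ p)
        - 2 * (φ (p.1, p.2+1) * φ p)) (fun p _ => by ring)]
    simp only [Finset.sum_add_distrib, Finset.sum_sub_distrib, ← Finset.mul_sum]
  rw [L, R, E1, E2, E3, E4, E5, E6, E7, E8, E9, E10]
  ring

/-- The cross term `h² ∑ Δₕˣφ · Δₕʸφ` is nonnegative; consequently each one-dimensional
discrete Laplacian is controlled in discrete `L²` by the full discrete Laplacian. -/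
theorem cross_laplacian_nonneg_and_estimates (m n : ℕ) [NeZero m] [NeZero n]
    (h : ℝ) (hh : 0 < h) (φ : Grid m n) :
    0 ≤ h ^ 2 * ∑ p : ZMod m × ZMod n, lapHx h φ p * lapHy h φ p ∧
    h ^ 2 * ∑ p : ZMod m × ZMod n, lapHx h φ p ^ 2
      ≤ h ^ 2 * ∑ p : ZMod m × ZMod n, lapH h φ p ^ 2 ∧
    h ^ 2 * ∑ p : ZMod m × ZMod n, lapHy h φ p ^ 2
      ≤ h ^ 2 * ∑ p : ZMod m × ZMod n, lapH h φ p ^ 2 := by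
  have hh2 : (h : ℝ) ^ 2 ≠ 0 := by positivity
  have key : (∑ p : ZMod m × ZMod n, lapHx h φ p * lapHy h φ p)
      = ∑ p : ZMod m × ZMod n,
          ((φ (p.1+1, p.2+1) - φ (p.1+1, p.2) - φ (p.1, p.2+1) + φ p) / h ^ 2) ^ 2 := by
    have : (∑ p : ZMod m × ZMod n, lapHx h φ p * lapHy h φ p)
        = (∑ p : ZMod m × ZMod n,
            (φ (p.1+1, p.2) - 2 * φ p + φ (p.1-1, p.2)) *
            (φ (p.1, p.2+1) - 2 * φ p + φ (p.1, p.2-1))) / (h ^ 2 * h ^ 2) := by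
      rw [Finset.sum_div]
      refine Finset.sum_congr rfl fun p _ => ?_
      simp only [lapHx, lapHy]
      field_simp
    rw [this, cross_sum_eq]
    rw [Finset.sum_div]
    refine Finset.sum_congr rfl fun p _ => ?_
    rw [div_pow]
    ring
  have crossNonneg : 0 ≤ ∑ p : ZMod m × ZMod n, lapHx h φ p * lapHy h φ p := by
    rw [key]; exact Finset.sum_nonneg fun p _ => sq_nonneg _
  have hsplit : ∀ p : ZMod m × ZMod n, lapH h φ p = lapHx h φ p + lapHy h φ p := by
    intro p; simp only [lapH, lapHx, lapHy]; ring
  have hsq : (∑ p : ZMod m × ZMod n, lapH h φ p ^ 2)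
      = (∑ p : ZMod m × ZMod n, lapHx h φ p ^ 2)
        + 2 * (∑ p : ZMod m × ZMod n, lapHx h φ p * lapHy h φ p)
        + (∑ p : ZMod m × ZMod n, lapHy h φ p ^ 2) := by
    rw [Finset.sum_congr rfl (g := fun p => lapHx h φ p ^ 2
        + 2 * (lapHx h φ p * lapHy h φ p) + lapHy h φ p ^ 2)
      (fun p _ => by rw [hsplit p]; ring)]
    simp only [Finset.sum_add_distrib, ← Finset.mul_sum]
  have hx2 : 0 ≤ ∑ p : ZMod m × ZMod n, lapHx h φ p ^ 2 :=
    Finset.sum_nonneg fun p _ => sq_nonneg _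
  have hy2 : 0 ≤ ∑ p : ZMod m × ZMod n, lapHy h φ p ^ 2 :=
    Finset.sum_nonneg fun p _ => sq_nonneg _
  have hp2 : (0:ℝ) ≤ h ^ 2 := sq_nonneg h
  refine ⟨mul_nonneg hp2 crossNonneg, ?_, ?_⟩ <;>
    [apply mul_le_mul_of_nonneg_left _ hp2; apply mul_le_mul_of_nonneg_left _ hp2] <;>
    nlinarith [hsq, crossNonneg, hx2, hy2]
end
end

section
/- Discrete Poincaré inequality: there exists a constant C₃ > 0 depending only on L_x and L_y (not on h, m, n) such that for every periodic grid function φ, ‖φ − φ̄‖₂ ≤ C₃·‖∇_hφ‖₂, where φ̄ denotes the constant grid function equal to the mean value (1/(m·n)) Σ_{i,j} φ(i,j). -/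
open Finset

noncomputable section

/-- Forward difference in the `x` direction. -/
def Dx {m n : ℕ} (h : ℝ) (φ : Grid m n) : Grid m n :=
  fun p => (φ (p.1 + 1, p.2) - φ p) / h

/-- Forward difference in the `y` direction. -/
def Dy {m n : ℕ} (h : ℝ) (φ : Grid m n) : Grid m n :=
  fun p => (φ (p.1, p.2 + 1) - φ p) / h

/-- Discrete `L²` norm. -/
def norm2 {m n : ℕ} [NeZero m] [NeZero n] (h : ℝ) (φ : Grid m n) : ℝ :=
  Real.sqrt (h ^ 2 * ∑ p : ZMod m × ZMod n, φ p ^ 2)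

/-- Discrete `L²` norm of the gradient. -/
def gradNorm2 {m n : ℕ} [NeZero m] [NeZero n] (h : ℝ) (φ : Grid m n) : ℝ :=
  Real.sqrt (h ^ 2 * ∑ p : ZMod m × ZMod n, (Dx h φ p ^ 2 + Dy h φ p ^ 2))

/-! On a finite abelian group with `N` elements write `E φ v = ∑ₚ (φ (p + v) - φ p)²`.
Since `φ̄ - φ p = N⁻¹ ∑ᵥ (φ (p + v) - φ p)`, Cauchy–Schwarz gives `N ∑ₚ (φ p - φ̄)² ≤ ∑ᵥ E φ v`.
On the grid every shift is `a e₁ + b e₂` with `a < m`, `b < n`; telescoping along unit steps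
and Cauchy–Schwarz again give `E φ (a e₁ + b e₂) ≤ 2 m² E φ e₁ + 2 n² E φ e₂`, and
`m² E φ e₁ = m² h² ∑ (Dₓφ)² = Lₓ² ∑ (Dₓφ)²`. Hence `C₃ = √(2 (Lₓ² + L_y²))` works. -/

section ShiftEnergy

variable {G : Type*} [AddCommGroup G] [Fintype G]

def shiftEnergy (f : G → ℝ) (v : G) : ℝ :=
  ∑ p, (f (p + v) - f p) ^ 2

lemma sum_sq_sub_translate_eq_shiftEnergy (f : G → ℝ) (v w : G) :
    ∑ p, (f (p + w + v) - f (p + w)) ^ 2 = shiftEnergy f v :=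
  Equiv.sum_comp (Equiv.addRight w) fun p => (f (p + v) - f p) ^ 2

lemma shiftEnergy_add_le (f : G → ℝ) (u v : G) :
    shiftEnergy f (u + v) ≤ 2 * shiftEnergy f u + 2 * shiftEnergy f v := by
  calc shiftEnergy f (u + v)
      = ∑ p, ((f (p + u + v) - f (p + u)) + (f (p + u) - f p)) ^ 2 := by
        simp only [shiftEnergy, add_assoc, sub_add_sub_cancel]
    _ ≤ ∑ p, 2 * ((f (p + u + v) - f (p + u)) ^ 2 + (f (p + u) - f p) ^ 2) :=
        sum_le_sum fun p _ => add_sq_le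
    _ = 2 * shiftEnergy f u + 2 * shiftEnergy f v := by
        rw [← mul_sum, sum_add_distrib, sum_sq_sub_translate_eq_shiftEnergy]
        change 2 * (shiftEnergy f v + shiftEnergy f u) = _
        ring

lemma shiftEnergy_nsmul_le (f : G → ℝ) (v : G) (k : ℕ) :
    shiftEnergy f (k • v) ≤ k ^ 2 * shiftEnergy f v := by
  have telescope : ∀ p, f (p + k • v) - f p
      = ∑ i ∈ range k, (f (p + i • v + v) - f (p + i • v)) := fun p => by
    have := sum_range_sub (fun i => f (p + i • v)) k
    simp only [succ_nsmul, ← add_assoc, zero_smul, add_zero] at this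
    exact this.symm
  calc shiftEnergy f (k • v)
      ≤ ∑ p, k * ∑ i ∈ range k, (f (p + i • v + v) - f (p + i • v)) ^ 2 := by
        refine sum_le_sum fun p _ => ?_
        rw [telescope]
        exact sq_sum_le_card_mul_sum_sq.trans_eq (by rw [card_range])
    _ = k ^ 2 * shiftEnergy f v := by
        rw [← mul_sum, sum_comm]
        simp only [sum_sq_sub_translate_eq_shiftEnergy, sum_const, card_range, nsmul_eq_mul]
        ring

lemma card_mul_sum_sq_sub_mean_le (f : G → ℝ) :
    Fintype.card G * ∑ p, (f p - (∑ q, f q) / Fintype.card G) ^ 2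
      ≤ ∑ v, shiftEnergy f v := by
  have hN : (0 : ℝ) < Fintype.card G := by simp [Fintype.card_pos]
  have mean_gap : ∀ p, Fintype.card G * ((∑ q, f q) / Fintype.card G - f p)
      = ∑ v, (f (p + v) - f p) := fun p => by
    have translate : ∑ v, f (p + v) = ∑ q, f q := Equiv.sum_comp (Equiv.addLeft p) f
    rw [sum_sub_distrib, translate, sum_const, card_univ, nsmul_eq_mul]
    field_simp
  have pointwise : ∀ p, Fintype.card G * (f p - (∑ q, f q) / Fintype.card G) ^ 2
      ≤ ∑ v, (f (p + v) - f p) ^ 2 := fun p => by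
    refine le_of_mul_le_mul_left ?_ hN
    calc (Fintype.card G : ℝ) * (Fintype.card G * (f p - (∑ q, f q) / Fintype.card G) ^ 2)
        = (∑ v, (f (p + v) - f p)) ^ 2 := by rw [← mean_gap]; ring
      _ ≤ Fintype.card G * ∑ v, (f (p + v) - f p) ^ 2 := sq_sum_le_card_mul_sum_sq
  calc (Fintype.card G : ℝ) * ∑ p, (f p - (∑ q, f q) / Fintype.card G) ^ 2
      ≤ ∑ p, ∑ v, (f (p + v) - f p) ^ 2 := by
        rw [mul_sum]; exact sum_le_sum fun p _ => pointwise p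
    _ = ∑ v, shiftEnergy f v := sum_comm

end ShiftEnergy

section Grid

variable {m n : ℕ} [NeZero m] [NeZero n]

lemma shiftEnergy_one_zero_eq {h : ℝ} (hh : h ≠ 0) (φ : Grid m n) :
    shiftEnergy φ (1, 0) = h ^ 2 * ∑ p, Dx h φ p ^ 2 := by
  simp only [shiftEnergy, Dx, mul_sum, div_pow, mul_div_cancel₀ _ (pow_ne_zero 2 hh),
    Prod.add_def, add_zero]

lemma shiftEnergy_zero_one_eq {h : ℝ} (hh : h ≠ 0) (φ : Grid m n) :
    shiftEnergy φ (0, 1) = h ^ 2 * ∑ p, Dy h φ p ^ 2 := by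
  simp only [shiftEnergy, Dy, mul_sum, div_pow, mul_div_cancel₀ _ (pow_ne_zero 2 hh),
    Prod.add_def, add_zero]

lemma shiftEnergy_le_axis_shifts (φ : Grid m n) (q : ZMod m × ZMod n) :
    shiftEnergy φ q ≤ 2 * m ^ 2 * shiftEnergy φ (1, 0) + 2 * n ^ 2 * shiftEnergy φ (0, 1) := by
  have hq : q = q.1.val • ((1, 0) : ZMod m × ZMod n) + q.2.val • (0, 1) := by
    ext <;> simp
  have hx : (q.1.val : ℝ) ≤ m := by exact_mod_cast (ZMod.val_lt q.1).le
  have hy : (q.2.val : ℝ) ≤ n := by exact_mod_cast (ZMod.val_lt q.2).le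
  have hE₁ : 0 ≤ shiftEnergy φ (1, 0) := sum_nonneg fun _ _ => sq_nonneg _
  have hE₂ : 0 ≤ shiftEnergy φ (0, 1) := sum_nonneg fun _ _ => sq_nonneg _
  calc shiftEnergy φ q
      ≤ 2 * shiftEnergy φ (q.1.val • (1, 0)) + 2 * shiftEnergy φ (q.2.val • (0, 1)) :=
        (congrArg (shiftEnergy φ) hq).trans_le (shiftEnergy_add_le φ _ _)
    _ ≤ 2 * (q.1.val ^ 2 * shiftEnergy φ (1, 0))
          + 2 * (q.2.val ^ 2 * shiftEnergy φ (0, 1)) := by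
        gcongr <;> exact shiftEnergy_nsmul_le φ _ _
    _ ≤ 2 * (m ^ 2 * shiftEnergy φ (1, 0)) + 2 * (n ^ 2 * shiftEnergy φ (0, 1)) := by
        gcongr
    _ = 2 * m ^ 2 * shiftEnergy φ (1, 0) + 2 * n ^ 2 * shiftEnergy φ (0, 1) := by ring

lemma sum_sq_sub_mean_le_axis_shifts (φ : Grid m n) :
    ∑ p, (φ p - (∑ q, φ q) / ((m : ℝ) * n)) ^ 2
      ≤ 2 * m ^ 2 * shiftEnergy φ (1, 0) + 2 * n ^ 2 * shiftEnergy φ (0, 1) := by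
  have card_eq : (Fintype.card (ZMod m × ZMod n) : ℝ) = m * n := by simp [ZMod.card]
  have key := (card_mul_sum_sq_sub_mean_le φ).trans
    (sum_le_sum fun q _ => shiftEnergy_le_axis_shifts φ q)
  rw [sum_const, card_univ, nsmul_eq_mul, card_eq] at key
  have hm : (0 : ℝ) < m := Nat.cast_pos.2 (NeZero.pos m)
  have hn : (0 : ℝ) < n := Nat.cast_pos.2 (NeZero.pos n)
  exact le_of_mul_le_mul_left key (mul_pos hm hn)

end Grid

/-- Discrete Poincaré inequality: there is a constant `C₃ > 0` depending only on
`Lx` and `Ly` (not on `h`, `m`, `n`) such that `‖φ − φ̄‖₂ ≤ C₃ ‖∇ₕφ‖₂` for every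
periodic grid function `φ`, where `φ̄` is the mean value of `φ`. -/
theorem discrete_poincare (Lx Ly : ℝ) (hLx : 0 < Lx) (hLy : 0 < Ly) :
    ∃ C₃ > (0 : ℝ), ∀ (m n : ℕ) [NeZero m] [NeZero n] (h : ℝ), 0 < h →
      (m : ℝ) * h = Lx → (n : ℝ) * h = Ly →
      ∀ φ : Grid m n,
        norm2 h (fun p => φ p - (∑ q : ZMod m × ZMod n, φ q) / ((m : ℝ) * (n : ℝ)))
          ≤ C₃ * gradNorm2 h φ := by
  refine ⟨√(2 * (Lx ^ 2 + Ly ^ 2)), by positivity, ?_⟩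
  intro m n _ _ h hh hmx hny φ
  have bound : ∑ p, (φ p - (∑ q, φ q) / ((m : ℝ) * n)) ^ 2
      ≤ 2 * Lx ^ 2 * ∑ p, Dx h φ p ^ 2 + 2 * Ly ^ 2 * ∑ p, Dy h φ p ^ 2 := by
    have := sum_sq_sub_mean_le_axis_shifts φ
    rw [shiftEnergy_one_zero_eq hh.ne', shiftEnergy_zero_one_eq hh.ne'] at this
    rw [← hmx, ← hny]
    linarith
  have hDx : 0 ≤ ∑ p, Dx h φ p ^ 2 := sum_nonneg fun _ _ => sq_nonneg _
  have hDy : 0 ≤ ∑ p, Dy h φ p ^ 2 := sum_nonneg fun _ _ => sq_nonneg _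
  have sq_bound : h ^ 2 * ∑ p, (φ p - (∑ q, φ q) / ((m : ℝ) * n)) ^ 2
      ≤ 2 * (Lx ^ 2 + Ly ^ 2) * (h ^ 2 * ∑ p, (Dx h φ p ^ 2 + Dy h φ p ^ 2)) := by
    have weights : 2 * Lx ^ 2 * ∑ p, Dx h φ p ^ 2 + 2 * Ly ^ 2 * ∑ p, Dy h φ p ^ 2
        ≤ 2 * (Lx ^ 2 + Ly ^ 2) * ∑ p, (Dx h φ p ^ 2 + Dy h φ p ^ 2) := by
      rw [sum_add_distrib]; nlinarith [sq_nonneg Lx, sq_nonneg Ly]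
    have := mul_le_mul_of_nonneg_left (bound.trans weights) (sq_nonneg h)
    linarith
  rw [norm2, gradNorm2, ← Real.sqrt_mul (by positivity)]
  exact Real.sqrt_le_sqrt sq_bound
end
end

section
/- There exists a constant C₄ > 0 depending only on L_x and L_y (not on h, m, n) such that for every periodic grid function φ: (i) ‖φ − φ̄‖₄ ≤ C₄·‖∇_hφ‖₂, where φ̄ is the constant grid function equal to the mean value (1/(m·n)) Σ_{i,j} φ(i,j); and (ii) ‖∇_hφ‖₄ ≤ C₄·‖Δ_hφ‖₂. -/
open Finset

noncomputable section

/-- Discrete `L⁴` norm. -/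
def norm4 {m n : ℕ} [NeZero m] [NeZero n] (h : ℝ) (φ : Grid m n) : ℝ :=
  (h ^ 2 * ∑ p : ZMod m × ZMod n, φ p ^ 4) ^ ((1 : ℝ) / 4)

/-- Discrete `L⁴` norm of the gradient. -/
def gradNorm4 {m n : ℕ} [NeZero m] [NeZero n] (h : ℝ) (φ : Grid m n) : ℝ :=
  (h ^ 2 * ∑ p : ZMod m × ZMod n, (Dx h φ p ^ 4 + Dy h φ p ^ 4)) ^ ((1 : ℝ) / 4)

/-!
For mean-zero `u`, bounding `|u(i,j)|` by the variation of `u` along row `j` plus the average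
variation along the columns gives the Poincaré inequality `‖u‖₂² ≤ 2(Lx² + Ly²) ‖∇ₕu‖₂²`.

The `L⁴` bound is Ladyzhenskaya's argument. On a cycle a value is at most the mean plus the total
variation, so `u(i,j)²` is bounded both by a quantity depending only on `j` (running along the row)
and by one depending only on `i` (running along the column). Hence `∑ u⁴` is at most the product of
the sums of these bounds, and by Cauchy–Schwarz each sum is at most `‖u‖₂² / L + 2 ‖u‖₂ ‖Du‖₂`.
Together with Poincaré this gives `‖u‖₄⁴ ≤ κ ‖∇ₕu‖₂⁴`, which is (i) for `u = φ - φ̄`. For (ii),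
apply it to `Dxφ` and `Dyφ`, which have mean zero, and use the summation-by-parts identity
`‖∇ₕ(Dxφ)‖₂² + ‖∇ₕ(Dyφ)‖₂² = ‖Δₕφ‖₂²`.

Columns of `u` are handled as rows of `u ∘ Prod.swap`.
-/

section Cycle

variable {m : ℕ} [NeZero m]

def cyclicVariation (f : ZMod m → ℝ) : ℝ :=
  ∑ a, |f (a + 1) - f a|

lemma abs_sub_le_cyclicVariation (f : ZMod m → ℝ) (i k : ZMod m) :
    |f i - f k| ≤ cyclicVariation f := by
  obtain ⟨r, hr, rfl⟩ : ∃ r < m, k + (r : ZMod m) = i :=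
    ⟨(i - k).val, ZMod.val_lt _, by simp⟩
  have telescope : f (k + r) - f k = ∑ t ∈ range r, (f (k + t + 1) - f (k + t)) := by
    simpa [add_assoc] using (sum_range_sub (fun t : ℕ => f (k + t)) r).symm
  have injOn : Set.InjOn (fun t : ℕ => k + (t : ZMod m)) (range r) := by
    intro t ht t' ht' he
    have hm : ∀ s ∈ range r, s < m := fun s hs => (mem_range.mp hs).trans hr
    rw [← ZMod.val_cast_of_lt (hm t ht), ← ZMod.val_cast_of_lt (hm t' ht'),
      add_left_cancel he]
  calc |f (k + r) - f k|
      ≤ ∑ t ∈ range r, |f (k + t + 1) - f (k + t)| := telescope ▸ abs_sum_le_sum_abs _ _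
    _ = ∑ a ∈ (range r).image (fun t : ℕ => k + (t : ZMod m)), |f (a + 1) - f a| :=
        (sum_image (f := fun a => |f (a + 1) - f a|) injOn).symm
    _ ≤ cyclicVariation f := sum_le_univ_sum_of_nonneg fun _ => abs_nonneg _

lemma le_mean_add_cyclicVariation (f : ZMod m → ℝ) (i : ZMod m) :
    f i ≤ (∑ k, f k) / m + cyclicVariation f := by
  have hm : (0 : ℝ) < m := Nat.cast_pos.mpr (NeZero.pos m)
  have h : ∑ k, (f i - f k) ≤ ∑ _k : ZMod m, cyclicVariation f :=
    sum_le_sum fun k _ => (le_abs_self _).trans (abs_sub_le_cyclicVariation f i k)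
  simp only [sum_sub_distrib, sum_const, card_univ, ZMod.card, nsmul_eq_mul] at h
  rw [div_add' _ _ _ hm.ne', le_div_iff₀ hm]
  linarith

lemma cyclicVariation_sq_le (f : ZMod m → ℝ) :
    cyclicVariation f ^ 2 ≤ m * ∑ a, (f (a + 1) - f a) ^ 2 := by
  simpa [cyclicVariation, ZMod.card] using
    sq_sum_le_card_mul_sum_sq (s := univ) (f := fun a => |f (a + 1) - f a|)

end Cycle

section Finite

variable {ι : Type*} [Fintype ι]

lemma card_mul_abs_le_sum_abs_sub_of_sum_eq_zero (f : ι → ℝ) (hf : ∑ x, f x = 0) (x : ι) :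
    Fintype.card ι * |f x| ≤ ∑ y, |f x - f y| := by
  have h : ∑ y, (f x - f y) = Fintype.card ι * f x := by
    simp [sum_sub_distrib, hf]
  calc (Fintype.card ι : ℝ) * |f x| = |∑ y, (f x - f y)| := by
        rw [h, abs_mul, Nat.abs_cast]
    _ ≤ ∑ y, |f x - f y| := abs_sum_le_sum_abs _ _

lemma sum_abs_sq_sub_sq_le (f g : ι → ℝ) (hfg : ∑ x, g x ^ 2 = ∑ x, f x ^ 2) :
    ∑ x, |g x ^ 2 - f x ^ 2| ≤ 2 * √(∑ x, f x ^ 2) * √(∑ x, (g x - f x) ^ 2) := by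
  have hsum : ∑ x, (g x + f x) ^ 2 ≤ 2 ^ 2 * ∑ x, f x ^ 2 := by
    calc ∑ x, (g x + f x) ^ 2 ≤ ∑ x, (2 * g x ^ 2 + 2 * f x ^ 2) :=
          sum_le_sum fun x _ => by nlinarith [sq_nonneg (g x - f x)]
      _ = 2 ^ 2 * ∑ x, f x ^ 2 := by rw [sum_add_distrib, ← mul_sum, ← mul_sum, hfg]; ring
  calc ∑ x, |g x ^ 2 - f x ^ 2| = ∑ x, |g x + f x| * |g x - f x| := by
        simp_rw [← abs_mul, ← sq_sub_sq]
    _ ≤ √(∑ x, |g x + f x| ^ 2) * √(∑ x, |g x - f x| ^ 2) :=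
        Real.sum_mul_le_sqrt_mul_sqrt _ _ _
    _ ≤ √(2 ^ 2 * ∑ x, f x ^ 2) * √(∑ x, (g x - f x) ^ 2) := by
        simp_rw [sq_abs]; gcongr
    _ = 2 * √(∑ x, f x ^ 2) * √(∑ x, (g x - f x) ^ 2) := by
        rw [Real.sqrt_mul (by norm_num), Real.sqrt_sq (by norm_num)]

end Finite

section SummationByParts

open fwdDiff

variable {G : Type*} [AddCommGroup G]

lemma fwdDiff_comm (e f : G) (φ : G → ℝ) : Δ_[e] (Δ_[f] φ) = Δ_[f] (Δ_[e] φ) := by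
  funext p
  simp only [fwdDiff, add_right_comm p e f]
  ring

variable [Fintype G]

lemma sum_comp_add_right (F : G → ℝ) (e : G) : ∑ p, F (p + e) = ∑ p, F p :=
  Equiv.sum_comp (Equiv.addRight e) F

lemma sum_fwdDiff_eq_zero (e : G) (φ : G → ℝ) : ∑ p, Δ_[e] φ p = 0 := by
  simp only [fwdDiff, sum_sub_distrib, sum_comp_add_right, sub_self]

lemma sum_fwdDiff_comp_sub_mul (e f : G) (a b : G → ℝ) :
    ∑ p, Δ_[e] a (p - e) * Δ_[f] b (p - f) = ∑ p, Δ_[f] a p * Δ_[e] b p := by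
  have h₁ : ∑ p, a p * b (p - f) = ∑ p, a (p + f) * b p := by
    simpa using (sum_comp_add_right (fun p => a p * b (p - f)) f).symm
  have h₂ : ∑ p, a (p - e) * b p = ∑ p, a p * b (p + e) := by
    simpa using (sum_comp_add_right (fun p => a (p - e) * b p) e).symm
  have h₃ : ∑ p, a (p - e) * b (p - f) = ∑ p, a (p + f) * b (p + e) := by
    rw [← sum_comp_add_right _ (e + f)]
    exact sum_congr rfl fun p _ => by congr 2 <;> abel
  simp only [fwdDiff, sub_add_cancel, sub_mul, mul_sub, sum_sub_distrib, h₁, h₂, h₃]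
  ring

theorem sum_sq_fwdDiff_fwdDiff_add (e f : G) (φ : G → ℝ) :
    ∑ p, (Δ_[e] (Δ_[e] φ) (p - e) + Δ_[f] (Δ_[f] φ) (p - f)) ^ 2
      = ∑ p, (Δ_[e] (Δ_[e] φ) p ^ 2 + Δ_[f] (Δ_[e] φ) p ^ 2)
        + ∑ p, (Δ_[e] (Δ_[f] φ) p ^ 2 + Δ_[f] (Δ_[f] φ) p ^ 2) := by
  have hee := sum_fwdDiff_comp_sub_mul e e (Δ_[e] φ) (Δ_[e] φ)
  have hff := sum_fwdDiff_comp_sub_mul f f (Δ_[f] φ) (Δ_[f] φ)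
  have hef := sum_fwdDiff_comp_sub_mul e f (Δ_[e] φ) (Δ_[f] φ)
  rw [fwdDiff_comm f e] at hef
  simp only [← pow_two] at hee hff
  simp only [add_sq, sum_add_distrib, mul_assoc, ← mul_sum, hee, hff, hef, fwdDiff_comm f e,
    ← pow_two]
  ring

end SummationByParts

section GridNorms

variable {m n : ℕ}

lemma Dx_comp_swap (h : ℝ) (u : Grid m n) : Dx h (u ∘ Prod.swap) = Dy h u ∘ Prod.swap :=
  rfl

variable [NeZero m] [NeZero n]

lemma sum_comp_swap (F : ZMod m × ZMod n → ℝ) :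
    ∑ q : ZMod n × ZMod m, F q.swap = ∑ p, F p :=
  (Equiv.prodComm _ _).sum_comp F

lemma sum_comp_add_fst (F : ZMod m × ZMod n → ℝ) (a : ZMod m) :
    ∑ p : ZMod m × ZMod n, F (p.1 + a, p.2) = ∑ p, F p :=
  ((Equiv.addRight a).prodCongr (Equiv.refl _)).sum_comp F

lemma norm2_nonneg (h : ℝ) (u : Grid m n) : 0 ≤ norm2 h u :=
  Real.sqrt_nonneg _

lemma norm2_sq (h : ℝ) (u : Grid m n) : norm2 h u ^ 2 = h ^ 2 * ∑ p, u p ^ 2 :=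
  Real.sq_sqrt (by positivity)

lemma norm2_eq_mul_sqrt {h : ℝ} (hh : 0 ≤ h) (u : Grid m n) :
    norm2 h u = h * √(∑ p, u p ^ 2) := by
  rw [norm2, Real.sqrt_mul (by positivity), Real.sqrt_sq hh]

lemma norm2_comp_swap (h : ℝ) (u : Grid m n) : norm2 h (u ∘ Prod.swap) = norm2 h u := by
  simp only [norm2, Function.comp_apply, sum_comp_swap (fun p => u p ^ 2)]

lemma norm2_Dx {h : ℝ} (hh : h ≠ 0) (u : Grid m n) :
    norm2 h (Dx h u) = √(∑ p : ZMod m × ZMod n, (u (p.1 + 1, p.2) - u p) ^ 2) := by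
  rw [norm2, mul_sum]
  congr 1
  refine sum_congr rfl fun p _ => ?_
  rw [Dx]
  field_simp

lemma gradNorm2_sq (h : ℝ) (u : Grid m n) :
    gradNorm2 h u ^ 2 = norm2 h (Dx h u) ^ 2 + norm2 h (Dy h u) ^ 2 := by
  rw [gradNorm2, norm2_sq, norm2_sq, Real.sq_sqrt (by positivity), sum_add_distrib, mul_add]

lemma gradNorm2_sub_const (h : ℝ) (φ : Grid m n) (c : ℝ) :
    gradNorm2 h (fun p => φ p - c) = gradNorm2 h φ := by
  simp only [gradNorm2, Dx, Dy, sub_sub_sub_cancel_right]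

lemma sum_sub_mean_eq_zero (φ : Grid m n) :
    ∑ p, (φ p - (∑ q, φ q) / (m * n)) = 0 := by
  have hmn : ((m : ℝ) * n) ≠ 0 := by simp [NeZero.ne]
  rw [sum_sub_distrib, sum_const, card_univ, Fintype.card_prod, ZMod.card, ZMod.card,
    nsmul_eq_mul, Nat.cast_mul, mul_div_cancel₀ _ hmn, sub_self]

end GridNorms

section Poincare

variable {m n : ℕ} [NeZero m] [NeZero n]

lemma abs_le_of_sum_eq_zero (u : Grid m n) (hu : ∑ p, u p = 0) (i : ZMod m) (j : ZMod n) :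
    |u (i, j)| ≤ cyclicVariation (fun a => u (a, j))
      + (∑ k, cyclicVariation (fun b => u (k, b))) / m := by
  set V := cyclicVariation (fun a => u (a, j))
  set W := fun k => cyclicVariation (fun b => u (k, b))
  have hm : (0 : ℝ) < m := Nat.cast_pos.mpr (NeZero.pos m)
  have hn : (0 : ℝ) < n := Nat.cast_pos.mpr (NeZero.pos n)
  have hpath : ∀ q : ZMod m × ZMod n, |u (i, j) - u q| ≤ V + W q.1 := fun q =>
    (abs_sub_le _ (u (q.1, j)) _).trans <| add_le_add
      (abs_sub_le_cyclicVariation (fun a => u (a, j)) i q.1)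
      (abs_sub_le_cyclicVariation (fun b => u (q.1, b)) j q.2)
  have hsum : ∑ q : ZMod m × ZMod n, (V + W q.1) = m * n * V + n * ∑ k, W k := by
    simp only [sum_add_distrib, sum_const, card_univ, Fintype.card_prod, ZMod.card,
      nsmul_eq_mul, Nat.cast_mul, Fintype.sum_prod_type, ← mul_sum]
  have key := (card_mul_abs_le_sum_abs_sub_of_sum_eq_zero u hu (i, j)).trans
    (sum_le_sum fun q _ => hpath q)
  rw [hsum, Fintype.card_prod, ZMod.card, ZMod.card, Nat.cast_mul] at key
  refine le_of_mul_le_mul_left (key.trans_eq ?_) (mul_pos hm hn)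
  field_simp

lemma sum_sq_le_of_sum_eq_zero (u : Grid m n) (hu : ∑ p, u p = 0) :
    ∑ p, u p ^ 2 ≤ 2 * m * ∑ j, cyclicVariation (fun a => u (a, j)) ^ 2
      + 2 * n * ∑ k, cyclicVariation (fun b => u (k, b)) ^ 2 := by
  set V := fun j => cyclicVariation (fun a => u (a, j))
  set W := fun k => cyclicVariation (fun b => u (k, b))
  have hm : (0 : ℝ) < m := Nat.cast_pos.mpr (NeZero.pos m)
  have hW : (∑ k, W k) ^ 2 ≤ m * ∑ k, W k ^ 2 := by
    simpa [ZMod.card] using sq_sum_le_card_mul_sum_sq (s := univ) (f := W)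
  have hpoint : ∀ p : ZMod m × ZMod n,
      u p ^ 2 ≤ 2 * V p.2 ^ 2 + 2 * ((∑ k, W k ^ 2) / m) := by
    rintro ⟨i, j⟩
    dsimp only
    have h1 : u (i, j) ^ 2 ≤ (V j + (∑ k, W k) / m) ^ 2 := by
      rw [← sq_abs]
      exact pow_le_pow_left₀ (abs_nonneg _) (abs_le_of_sum_eq_zero u hu i j) 2
    have h2 : ((∑ k, W k) / m) ^ 2 ≤ (∑ k, W k ^ 2) / m := by
      rw [div_pow, div_le_div_iff₀ (by positivity) hm]
      nlinarith
    have h3 : (V j + (∑ k, W k) / m) ^ 2 ≤ 2 * V j ^ 2 + 2 * ((∑ k, W k) / m) ^ 2 := by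
      nlinarith [sq_nonneg (V j - (∑ k, W k) / m)]
    linarith
  calc ∑ p, u p ^ 2 ≤ ∑ p : ZMod m × ZMod n, (2 * V p.2 ^ 2 + 2 * ((∑ k, W k ^ 2) / m)) :=
        sum_le_sum fun p _ => hpoint p
    _ = 2 * m * ∑ j, V j ^ 2 + 2 * n * ∑ k, W k ^ 2 := by
        simp only [sum_add_distrib, ← mul_sum, Fintype.sum_prod_type_right, sum_const,
          card_univ, ZMod.card, nsmul_eq_mul, Fintype.card_prod, Nat.cast_mul]
        field_simp

lemma sum_sq_cyclicVariation_le (u : Grid m n) :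
    ∑ j, cyclicVariation (fun a => u (a, j)) ^ 2
      ≤ m * ∑ p : ZMod m × ZMod n, (u (p.1 + 1, p.2) - u p) ^ 2 := by
  rw [Fintype.sum_prod_type_right, mul_sum]
  exact sum_le_sum fun j _ => cyclicVariation_sq_le _

theorem norm2_sq_le_of_sum_eq_zero {h : ℝ} (hh : h ≠ 0) (u : Grid m n) (hu : ∑ p, u p = 0) :
    norm2 h u ^ 2 ≤ 2 * (m * h) ^ 2 * norm2 h (Dx h u) ^ 2
      + 2 * (n * h) ^ 2 * norm2 h (Dy h u) ^ 2 := by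
  rw [← norm2_comp_swap h (Dy h u), ← Dx_comp_swap, norm2_Dx hh, norm2_Dx hh, norm2_sq,
    Real.sq_sqrt (by positivity), Real.sq_sqrt (by positivity)]
  have hx := sum_sq_cyclicVariation_le u
  have hy : ∑ k, cyclicVariation (fun b => u (k, b)) ^ 2 ≤ n * _ :=
    sum_sq_cyclicVariation_le (u ∘ Prod.swap)
  calc h ^ 2 * ∑ p, u p ^ 2 ≤ h ^ 2 * (2 * m * (m * _) + 2 * n * (n * _)) := by
        gcongr
        exact (sum_sq_le_of_sum_eq_zero u hu).trans (by gcongr)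
    _ = _ := by ring

end Poincare

section Ladyzhenskaya

variable {m n : ℕ} [NeZero m]

def rowBound (u : Grid m n) (j : ZMod n) : ℝ :=
  (∑ k, u (k, j) ^ 2) / m + cyclicVariation (fun a => u (a, j) ^ 2)

lemma sq_le_rowBound (u : Grid m n) (i : ZMod m) (j : ZMod n) : u (i, j) ^ 2 ≤ rowBound u j :=
  le_mean_add_cyclicVariation (fun a => u (a, j) ^ 2) i

lemma rowBound_nonneg (u : Grid m n) (j : ZMod n) : 0 ≤ rowBound u j :=
  (sq_nonneg _).trans (sq_le_rowBound u 0 j)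

variable [NeZero n]

lemma sum_pow_four_le_mul_sum_rowBound (u : Grid m n) :
    ∑ p, u p ^ 4 ≤ (∑ j, rowBound u j) * ∑ i, rowBound (u ∘ Prod.swap) i := by
  calc ∑ p, u p ^ 4
      ≤ ∑ p : ZMod m × ZMod n, rowBound u p.2 * rowBound (u ∘ Prod.swap) p.1 := by
        refine sum_le_sum fun p _ => ?_
        rw [show u p ^ 4 = u p ^ 2 * u p ^ 2 by ring]
        exact mul_le_mul (sq_le_rowBound u p.1 p.2) (sq_le_rowBound (u ∘ Prod.swap) p.2 p.1)
          (sq_nonneg _) (rowBound_nonneg u p.2)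
    _ = _ := by rw [sum_mul_sum, Fintype.sum_prod_type_right]

lemma mul_sum_rowBound_le {h : ℝ} (hh : 0 < h) (u : Grid m n) :
    h * ∑ j, rowBound u j ≤ norm2 h u ^ 2 / (m * h) + 2 * norm2 h u * norm2 h (Dx h u) := by
  have hrows : ∑ j, rowBound u j
      = (∑ p, u p ^ 2) / m + ∑ p : ZMod m × ZMod n, |u (p.1 + 1, p.2) ^ 2 - u p ^ 2| := by
    simp only [rowBound, cyclicVariation, sum_add_distrib, ← sum_div]
    rw [Fintype.sum_prod_type_right (fun p => u p ^ 2),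
      Fintype.sum_prod_type_right (fun p => |u (p.1 + 1, p.2) ^ 2 - u p ^ 2|)]
  have hvar := sum_abs_sq_sub_sq_le u (fun p => u (p.1 + 1, p.2))
    (sum_comp_add_fst (fun p => u p ^ 2) 1)
  rw [hrows, norm2_eq_mul_sqrt hh.le, norm2_Dx hh.ne']
  calc h * ((∑ p, u p ^ 2) / m + ∑ p : ZMod m × ZMod n, |u (p.1 + 1, p.2) ^ 2 - u p ^ 2|)
      ≤ h * ((∑ p, u p ^ 2) / m + 2 * √(∑ p, u p ^ 2)
          * √(∑ p : ZMod m × ZMod n, (u (p.1 + 1, p.2) - u p) ^ 2)) := by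
        gcongr
    _ = _ := by
        rw [mul_pow, Real.sq_sqrt (by positivity)]
        field_simp

theorem sum_pow_four_le {h : ℝ} (hh : 0 < h) (u : Grid m n) :
    h ^ 2 * ∑ p, u p ^ 4
      ≤ (norm2 h u ^ 2 / (m * h) + 2 * norm2 h u * norm2 h (Dx h u))
        * (norm2 h u ^ 2 / (n * h) + 2 * norm2 h u * norm2 h (Dy h u)) := by
  have hcols := mul_sum_rowBound_le hh (u ∘ Prod.swap)
  rw [norm2_comp_swap, Dx_comp_swap, norm2_comp_swap] at hcols
  have := norm2_nonneg h u
  have := norm2_nonneg h (Dx h u)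
  calc h ^ 2 * ∑ p, u p ^ 4
      ≤ h ^ 2 * ((∑ j, rowBound u j) * ∑ i, rowBound (u ∘ Prod.swap) i) := by
        gcongr
        exact sum_pow_four_le_mul_sum_rowBound u
    _ = (h * ∑ j, rowBound u j) * (h * ∑ i, rowBound (u ∘ Prod.swap) i) := by ring
    _ ≤ _ := mul_le_mul (mul_sum_rowBound_le hh u) hcols
        (mul_nonneg hh.le (sum_nonneg fun i _ => rowBound_nonneg (u ∘ Prod.swap) i))
        (by positivity)

end Ladyzhenskaya

section GridLaplacian

open fwdDiff

variable {m n : ℕ}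

lemma Dx_eq_smul_fwdDiff (h : ℝ) (φ : Grid m n) :
    Dx h φ = h⁻¹ • Δ_[((1 : ZMod m), (0 : ZMod n))] φ := by
  funext p
  rw [Dx, Pi.smul_apply, fwdDiff, show p + (1, 0) = (p.1 + 1, p.2) from Prod.ext rfl (add_zero _),
    smul_eq_mul, inv_mul_eq_div]

lemma Dy_eq_smul_fwdDiff (h : ℝ) (φ : Grid m n) :
    Dy h φ = h⁻¹ • Δ_[((0 : ZMod m), (1 : ZMod n))] φ := by
  funext p
  rw [Dy, Pi.smul_apply, fwdDiff, show p + (0, 1) = (p.1, p.2 + 1) from Prod.ext (add_zero _) rfl,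
    smul_eq_mul, inv_mul_eq_div]

lemma lapH_eq (h : ℝ) (φ : Grid m n) (p : ZMod m × ZMod n) :
    lapH h φ p = (h ^ 2)⁻¹ * (Δ_[((1 : ZMod m), (0 : ZMod n))] (Δ_[(1, 0)] φ) (p - (1, 0))
      + Δ_[((0 : ZMod m), (1 : ZMod n))] (Δ_[(0, 1)] φ) (p - (0, 1))) := by
  simp only [lapH, fwdDiff, sub_add_cancel]
  rw [show p + (1, 0) = (p.1 + 1, p.2) from Prod.ext rfl (add_zero _),
    show p + (0, 1) = (p.1, p.2 + 1) from Prod.ext (add_zero _) rfl,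
    show p - (1, 0) = (p.1 - 1, p.2) from Prod.ext rfl (sub_zero _),
    show p - (0, 1) = (p.1, p.2 - 1) from Prod.ext (sub_zero _) rfl]
  ring

variable [NeZero m] [NeZero n]

lemma sum_Dx_eq_zero (h : ℝ) (φ : Grid m n) : ∑ p, Dx h φ p = 0 := by
  simp only [Dx_eq_smul_fwdDiff, Pi.smul_apply, smul_eq_mul, ← mul_sum, sum_fwdDiff_eq_zero,
    mul_zero]

lemma sum_Dy_eq_zero (h : ℝ) (φ : Grid m n) : ∑ p, Dy h φ p = 0 := by
  simp only [Dy_eq_smul_fwdDiff, Pi.smul_apply, smul_eq_mul, ← mul_sum, sum_fwdDiff_eq_zero,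
    mul_zero]

theorem norm2_lapH_sq (h : ℝ) (φ : Grid m n) :
    norm2 h (lapH h φ) ^ 2 = gradNorm2 h (Dx h φ) ^ 2 + gradNorm2 h (Dy h φ) ^ 2 := by
  have key := sum_sq_fwdDiff_fwdDiff_add ((1 : ZMod m), (0 : ZMod n)) (0, 1) φ
  rw [norm2_sq, gradNorm2, gradNorm2, Real.sq_sqrt (by positivity), Real.sq_sqrt (by positivity)]
  simp only [lapH_eq, Dx_eq_smul_fwdDiff, Dy_eq_smul_fwdDiff, fwdDiff_const_smul, Pi.smul_apply,
    smul_eq_mul, mul_pow, ← mul_add, ← mul_sum, key]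
  ring

end GridLaplacian

section Constants

def poincareConst (Lx Ly : ℝ) : ℝ :=
  2 * (Lx ^ 2 + Ly ^ 2)

def ladyzhenskayaConst (Lx Ly : ℝ) : ℝ :=
  (poincareConst Lx Ly / Lx + 2 * √(poincareConst Lx Ly))
    * (poincareConst Lx Ly / Ly + 2 * √(poincareConst Lx Ly))

lemma ladyzhenskayaConst_pos {Lx Ly : ℝ} (hLx : 0 < Lx) (hLy : 0 < Ly) :
    0 < ladyzhenskayaConst Lx Ly := by
  unfold ladyzhenskayaConst poincareConst
  positivity

lemma rpow_one_fourth_le_mul {a κ G : ℝ} (ha : 0 ≤ a) (hκ : 0 ≤ κ) (hG : 0 ≤ G)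
    (h : a ≤ κ * G ^ 4) : a ^ ((1 : ℝ) / 4) ≤ κ ^ ((1 : ℝ) / 4) * G := by
  calc a ^ ((1 : ℝ) / 4) ≤ (κ * G ^ 4) ^ ((1 : ℝ) / 4) :=
        Real.rpow_le_rpow ha h (by norm_num)
    _ = κ ^ ((1 : ℝ) / 4) * G := by
        rw [Real.mul_rpow hκ (by positivity), ← Real.rpow_natCast, ← Real.rpow_mul hG]
        norm_num

end Constants

section Sobolev

variable {m n : ℕ} [NeZero m] [NeZero n]

theorem norm2_sq_le_poincareConst_mul {h : ℝ} (hh : h ≠ 0) (u : Grid m n)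
    (hu : ∑ p, u p = 0) :
    norm2 h u ^ 2 ≤ poincareConst (m * h) (n * h) * gradNorm2 h u ^ 2 := by
  rw [gradNorm2_sq, poincareConst]
  nlinarith [norm2_sq_le_of_sum_eq_zero hh u hu, mul_nonneg (sq_nonneg ((m : ℝ) * h))
    (sq_nonneg (norm2 h (Dy h u))), mul_nonneg (sq_nonneg ((n : ℝ) * h))
    (sq_nonneg (norm2 h (Dx h u)))]

theorem sum_pow_four_le_of_sum_eq_zero {h : ℝ} (hh : 0 < h) (u : Grid m n)
    (hu : ∑ p, u p = 0) :
    h ^ 2 * ∑ p, u p ^ 4 ≤ ladyzhenskayaConst (m * h) (n * h) * gradNorm2 h u ^ 4 := by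
  set P := poincareConst (m * h) (n * h)
  set G := gradNorm2 h u
  have hP : 0 ≤ P := by simp only [P, poincareConst]; positivity
  have hm : (0 : ℝ) < m := Nat.cast_pos.mpr (NeZero.pos m)
  have hn : (0 : ℝ) < n := Nat.cast_pos.mpr (NeZero.pos n)
  have hG : 0 ≤ G := Real.sqrt_nonneg _
  have hu0 := norm2_nonneg h u
  have hu_le : norm2 h u ≤ √P * G := by
    rw [← Real.sqrt_sq hu0, ← Real.sqrt_sq hG, ← Real.sqrt_mul hP]
    exact Real.sqrt_le_sqrt (norm2_sq_le_poincareConst_mul hh.ne' u hu)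
  have factor : ∀ L > 0, ∀ b, 0 ≤ b → b ^ 2 ≤ G ^ 2 →
      norm2 h u ^ 2 / L + 2 * norm2 h u * b ≤ (P / L + 2 * √P) * G ^ 2 := by
    intro L hL b hb hbG
    calc norm2 h u ^ 2 / L + 2 * norm2 h u * b ≤ (√P * G) ^ 2 / L + 2 * (√P * G) * G := by
          gcongr
          exact (pow_le_pow_iff_left₀ hb hG two_ne_zero).mp hbG
      _ = (P / L + 2 * √P) * G ^ 2 := by
          rw [mul_pow, Real.sq_sqrt hP]
          ring
  have hGsq := gradNorm2_sq h u
  calc h ^ 2 * ∑ p, u p ^ 4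
      ≤ (norm2 h u ^ 2 / (m * h) + 2 * norm2 h u * norm2 h (Dx h u))
        * (norm2 h u ^ 2 / (n * h) + 2 * norm2 h u * norm2 h (Dy h u)) := sum_pow_four_le hh u
    _ ≤ ((P / (m * h) + 2 * √P) * G ^ 2) * ((P / (n * h) + 2 * √P) * G ^ 2) := by
        have := norm2_nonneg h (Dy h u)
        gcongr
        · exact factor _ (by positivity) _ (norm2_nonneg _ _)
            (by rw [hGsq]; exact le_add_of_nonneg_right (sq_nonneg _))
        · exact factor _ (by positivity) _ (norm2_nonneg _ _)
            (by rw [hGsq]; exact le_add_of_nonneg_left (sq_nonneg _))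
    _ = ladyzhenskayaConst (m * h) (n * h) * G ^ 4 := by
        rw [ladyzhenskayaConst]
        ring

theorem norm4_sub_mean_le {h : ℝ} (hh : 0 < h) (φ : Grid m n) :
    norm4 h (fun p => φ p - (∑ q, φ q) / (m * n))
      ≤ ladyzhenskayaConst (m * h) (n * h) ^ ((1 : ℝ) / 4) * gradNorm2 h φ := by
  have hm : (0 : ℝ) < m := Nat.cast_pos.mpr (NeZero.pos m)
  have hn : (0 : ℝ) < n := Nat.cast_pos.mpr (NeZero.pos n)
  rw [norm4, ← gradNorm2_sub_const h φ ((∑ q, φ q) / (m * n))]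
  exact rpow_one_fourth_le_mul (by positivity)
    (ladyzhenskayaConst_pos (by positivity) (by positivity)).le (Real.sqrt_nonneg _)
    (sum_pow_four_le_of_sum_eq_zero hh _ (sum_sub_mean_eq_zero φ))

theorem gradNorm4_le {h : ℝ} (hh : 0 < h) (φ : Grid m n) :
    gradNorm4 h φ
      ≤ ladyzhenskayaConst (m * h) (n * h) ^ ((1 : ℝ) / 4) * norm2 h (lapH h φ) := by
  have hm : (0 : ℝ) < m := Nat.cast_pos.mpr (NeZero.pos m)
  have hn : (0 : ℝ) < n := Nat.cast_pos.mpr (NeZero.pos n)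
  set κ := ladyzhenskayaConst (m * h) (n * h)
  have hκ : 0 ≤ κ := (ladyzhenskayaConst_pos (by positivity) (by positivity)).le
  set G₁ := gradNorm2 h (Dx h φ)
  set G₂ := gradNorm2 h (Dy h φ)
  rw [gradNorm4, sum_add_distrib, mul_add]
  refine rpow_one_fourth_le_mul (by positivity) hκ (norm2_nonneg _ _) ?_
  calc h ^ 2 * ∑ p, Dx h φ p ^ 4 + h ^ 2 * ∑ p, Dy h φ p ^ 4
      ≤ κ * G₁ ^ 4 + κ * G₂ ^ 4 :=
        add_le_add (sum_pow_four_le_of_sum_eq_zero hh _ (sum_Dx_eq_zero h φ))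
          (sum_pow_four_le_of_sum_eq_zero hh _ (sum_Dy_eq_zero h φ))
    _ ≤ κ * (G₁ ^ 2 + G₂ ^ 2) ^ 2 := by
        nlinarith [mul_nonneg hκ (mul_nonneg (sq_nonneg G₁) (sq_nonneg G₂))]
    _ = κ * norm2 h (lapH h φ) ^ 4 := by
        rw [show norm2 h (lapH h φ) ^ 4 = (norm2 h (lapH h φ) ^ 2) ^ 2 by ring, norm2_lapH_sq]

end Sobolev

/-- There is a constant `C₄ > 0` depending only on `Lx` and `Ly` (not on `h`, `m`, `n`)
such that for every periodic grid function `φ`: `‖φ − φ̄‖₄ ≤ C₄ ‖∇ₕφ‖₂` and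
`‖∇ₕφ‖₄ ≤ C₄ ‖Δₕφ‖₂`. -/
theorem discrete_poincare_L4 (Lx Ly : ℝ) (hLx : 0 < Lx) (hLy : 0 < Ly) :
    ∃ C₄ > (0 : ℝ), ∀ (m n : ℕ) [NeZero m] [NeZero n] (h : ℝ), 0 < h →
      (m : ℝ) * h = Lx → (n : ℝ) * h = Ly →
      ∀ φ : Grid m n,
        norm4 h (fun p => φ p - (∑ q : ZMod m × ZMod n, φ q) / ((m : ℝ) * (n : ℝ)))
          ≤ C₄ * gradNorm2 h φ ∧
        gradNorm4 h φ ≤ C₄ * norm2 h (lapH h φ) := by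
  refine ⟨ladyzhenskayaConst Lx Ly ^ ((1 : ℝ) / 4),
    Real.rpow_pos_of_pos (ladyzhenskayaConst_pos hLx hLy) _, ?_⟩
  rintro m n _ _ h hh rfl rfl φ
  exact ⟨norm4_sub_mean_le hh φ, gradNorm4_le hh φ⟩
end
end
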